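/- Fix g ≥ 1 and indices i, j, k, l, m, n ∈ {1,…,g}. There exists a universal polynomial P in the partial derivatives of σ of order at most 3 such that for every infinitely complex-differentiable σ : ℂ^g → ℂ and every u with σ(u) ≠ 0, σ(u)⁴ · [℘_{ij}℘_{kl}℘_{mn} − (1/8)(℘_{ijk}℘_{lmn} + ℘_{ijl}℘_{kmn} + ℘_{ijm}℘_{kln} + ℘_{ijn}℘_{klm} + ℘_{ikl}℘_{jmn} − ℘_{ikm}℘_{jln} − ℘_{ikn}℘_{jlm} − ℘_{ilm}℘_{jkn} − ℘_{iln}℘_{jkm} + ℘_{imn}℘_{jkl})](u) = P evaluated at the partial derivatives of σ at u. In particular this six-index combination has poles of order at most four along the zero set of σ, although its individual terms have poles of order six. -/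

import Mathlib

noncomputable section

/-- Partial derivative in the `i`-th coordinate direction. -/
def pd {g : ℕ} (i : Fin g) (f : (Fin g → ℂ) → ℂ) : (Fin g → ℂ) → ℂ :=
  fun u => fderiv ℂ f u (Pi.single i 1)

/-- Iterated partial derivative along a list of coordinate indices. -/
def pdIter {g : ℕ} (l : List (Fin g)) (f : (Fin g → ℂ) → ℂ) : (Fin g → ℂ) → ℂ :=
  l.foldl (fun h i => pd i h) f

/-- The 2-index Kleinian ℘-function ℘_{ij} = (σ_i σ_j − σ σ_{ij}) / σ². -/
def wp2 {g : ℕ} (σ : (Fin g → ℂ) → ℂ) (i j : Fin g) : (Fin g → ℂ) → ℂ :=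
  fun u => (pd i σ u * pd j σ u - σ u * pd j (pd i σ) u) / σ u ^ 2

/-- The m-index Kleinian ℘-function ℘_{i j k₁ ⋯ k_r}, obtained from ℘_{ij} by
successively differentiating with respect to the coordinates in `ks`. -/
def wp {g : ℕ} (σ : (Fin g → ℂ) → ℂ) (i j : Fin g) (ks : List (Fin g)) :
    (Fin g → ℂ) → ℂ :=
  ks.foldl (fun h k => pd k h) (wp2 σ i j)

/-!
Write `℘_{ij} = N_{ij} / σ²` and `℘_{ijk} = N_{ijk} / σ³`, where the numerators are polynomials in
the derivatives of `σ`. Then `σ⁴` times the six-index combination is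
`(8 N_{ij} N_{kl} N_{mn} - Σ ± N_{•••} N_{•••}) / (8 σ²)`. Viewing this numerator as a polynomial in
the value `σ` (all derivatives being independent), its coefficients of `σ⁰` and `σ¹` cancel
identically, so it is `σ²` times a universal polynomial.
-/

namespace SixIndex

section Jet

variable {R : Type*} [CommRing R] {g : ℕ} (D : List (Fin g) → R)

/- `D α` stands for `∂^α σ (u)`, with `D [i, j] = ∂_j ∂_i σ (u)` as in `pdIter`, and `D []` for
`σ u`. Then `wp2Num D i j = σ² ℘_{ij}` and `wp3Num D i j k = σ³ ℘_{ijk}`, the latter given by its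
coefficients `wp3Num₀`, `wp3Num₁`, `wp3Num₂` of `σ⁰`, `σ¹`, `σ²`. -/

def wp2Num (i j : Fin g) : R := D [i] * D [j] - D [] * D [i, j]

def wp3Num₀ (i j k : Fin g) : R := -2 * D [i] * D [j] * D [k]

def wp3Num₁ (i j k : Fin g) : R := D [i, k] * D [j] + D [i] * D [j, k] + D [k] * D [i, j]

def wp3Num₂ (i j k : Fin g) : R := -D [i, j, k]

def wp3Num (i j k : Fin g) : R :=
  wp3Num₀ D i j k + D [] * wp3Num₁ D i j k + D [] ^ 2 * wp3Num₂ D i j k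

def pairing (F G : Fin g → Fin g → Fin g → R) (i j k l m n : Fin g) : R :=
  F i j k * G l m n + F i j l * G k m n + F i j m * G k l n + F i j n * G k l m
    + F i k l * G j m n - F i k m * G j l n - F i k n * G j l m - F i l m * G j k n
    - F i l n * G j k m + F i m n * G j k l

variable (i j k l m n : Fin g)

theorem pairing_expand (F₀ F₁ F₂ : Fin g → Fin g → Fin g → R) (t : R) :
    pairing (fun a b c => F₀ a b c + t * F₁ a b c + t ^ 2 * F₂ a b c)
        (fun a b c => F₀ a b c + t * F₁ a b c + t ^ 2 * F₂ a b c) i j k l m n =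
      pairing F₀ F₀ i j k l m n
        + t * (pairing F₀ F₁ i j k l m n + pairing F₁ F₀ i j k l m n)
        + t ^ 2 * (pairing F₁ F₁ i j k l m n + pairing F₀ F₂ i j k l m n
          + pairing F₂ F₀ i j k l m n)
        + t ^ 3 * (pairing F₁ F₂ i j k l m n + pairing F₂ F₁ i j k l m n)
        + t ^ 4 * pairing F₂ F₂ i j k l m n := by
  simp only [pairing]
  ring

theorem pairing_div {K : Type*} [Field K] (F G : Fin g → Fin g → Fin g → K) (t : K) :
    pairing (fun a b c => F a b c / t) (fun a b c => G a b c / t) i j k l m n =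
      pairing F G i j k l m n / t ^ 2 := by
  simp only [pairing]
  ring

theorem pairing_wp3Num₀_self :
    pairing (wp3Num₀ D) (wp3Num₀ D) i j k l m n =
      8 * (D [i] * D [j] * D [k] * D [l] * D [m] * D [n]) := by
  simp only [pairing, wp3Num₀]
  ring

theorem pairing_wp3Num₀_wp3Num₁_add :
    pairing (wp3Num₀ D) (wp3Num₁ D) i j k l m n + pairing (wp3Num₁ D) (wp3Num₀ D) i j k l m n =
      -8 * (D [i, j] * D [k] * D [l] * D [m] * D [n] + D [i] * D [j] * D [k, l] * D [m] * D [n]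
        + D [i] * D [j] * D [k] * D [l] * D [m, n]) := by
  simp only [pairing, wp3Num₀, wp3Num₁]
  ring

/-- `8 σ⁴` times the six-index combination: the coefficients of `σ²`, `σ³`, `σ⁴` of the numerator
`8 N N N - Σ ± N N`, whose coefficients of `σ⁰` and `σ¹` vanish. -/
def quotient : R :=
  8 * (D [i] * D [j] * D [k, l] * D [m, n] + D [i, j] * D [k] * D [l] * D [m, n]
      + D [i, j] * D [k, l] * D [m] * D [n])
    - (pairing (wp3Num₁ D) (wp3Num₁ D) i j k l m n + pairing (wp3Num₀ D) (wp3Num₂ D) i j k l m n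
      + pairing (wp3Num₂ D) (wp3Num₀ D) i j k l m n)
    - D [] * (8 * D [i, j] * D [k, l] * D [m, n] + pairing (wp3Num₁ D) (wp3Num₂ D) i j k l m n
      + pairing (wp3Num₂ D) (wp3Num₁ D) i j k l m n)
    - D [] ^ 2 * pairing (wp3Num₂ D) (wp3Num₂ D) i j k l m n

theorem sq_mul_quotient :
    D [] ^ 2 * quotient D i j k l m n =
      8 * (wp2Num D i j * wp2Num D k l * wp2Num D m n)
        - pairing (wp3Num D) (wp3Num D) i j k l m n := by
  rw [show wp3Num D = fun a b c =>
      wp3Num₀ D a b c + D [] * wp3Num₁ D a b c + D [] ^ 2 * wp3Num₂ D a b c from rfl,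
    pairing_expand, pairing_wp3Num₀_self, pairing_wp3Num₀_wp3Num₁_add, quotient, wp2Num, wp2Num,
    wp2Num]
  ring

theorem map_quotient {S : Type*} [CommRing S] (φ : R →+* S) :
    φ (quotient D i j k l m n) = quotient (φ ∘ D) i j k l m n := by
  simp [quotient, pairing, wp3Num₀, wp3Num₁, wp3Num₂, map_ofNat]

theorem quotient_congr {D' : List (Fin g) → R}
    (h : ∀ α : List (Fin g), α.length ≤ 3 → D α = D' α) :
    quotient D i j k l m n = quotient D' i j k l m n := by
  simp [quotient, pairing, wp3Num₀, wp3Num₁, wp3Num₂, h]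

theorem pow_four_mul_combination {K : Type*} [Field K] [CharZero K] (D : List (Fin g) → K)
    (hD : D [] ≠ 0) (w2 : Fin g → Fin g → K) (w3 : Fin g → Fin g → Fin g → K)
    (hw2 : ∀ a b, w2 a b = wp2Num D a b / D [] ^ 2)
    (hw3 : ∀ a b c, w3 a b c = wp3Num D a b c / D [] ^ 3) :
    D [] ^ 4 * (w2 i j * w2 k l * w2 m n - 1 / 8 * pairing w3 w3 i j k l m n) =
      1 / 8 * quotient D i j k l m n := by
  obtain rfl : w3 = fun a b c => wp3Num D a b c / D [] ^ 3 := by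
    funext a b c
    exact hw3 a b c
  rw [pairing_div, hw2, hw2, hw2]
  field_simp
  linear_combination -sq_mul_quotient D i j k l m n

/- The `else 0` branch is never evaluated: `quotient` only reads `D` on lists of length `≤ 3`. -/
def universalPoly : MvPolynomial {α : List (Fin g) // α.length ≤ 3} ℚ :=
  MvPolynomial.C (1 / 8) *
    quotient (fun α => if h : α.length ≤ 3 then MvPolynomial.X ⟨α, h⟩ else 0) i j k l m n

theorem aeval_universalPoly {S : Type*} [CommRing S] [Algebra ℚ S] (F : List (Fin g) → S) :
    MvPolynomial.aeval (fun v => F v.1) (universalPoly i j k l m n) =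
      algebraMap ℚ S (1 / 8) * quotient F i j k l m n := by
  rw [universalPoly, map_mul, MvPolynomial.aeval_C, ← AlgHom.coe_toRingHom, map_quotient]
  congr 1
  apply quotient_congr
  intro α hα
  simp [hα]

end Jet

end SixIndex

section PartialDerivative

variable {g : ℕ} {f h : (Fin g → ℂ) → ℂ} {u : Fin g → ℂ} {c : Fin g}

theorem contDiff_pd (hf : ContDiff ℂ ⊤ f) (c : Fin g) : ContDiff ℂ ⊤ (pd c f) :=
  (hf.fderiv_right le_top).clm_apply contDiff_const

theorem pd_sub (hf : DifferentiableAt ℂ f u) (hh : DifferentiableAt ℂ h u) :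
    pd c (fun x => f x - h x) u = pd c f u - pd c h u := by
  simp [pd, fderiv_fun_sub hf hh]

theorem pd_mul (hf : DifferentiableAt ℂ f u) (hh : DifferentiableAt ℂ h u) :
    pd c (fun x => f x * h x) u = pd c f u * h u + f u * pd c h u := by
  simp [pd, fderiv_fun_mul hf hh, add_comm, mul_comm]

theorem pd_pow (hf : DifferentiableAt ℂ f u) (n : ℕ) :
    pd c (fun x => f x ^ n) u = n * f u ^ (n - 1) * pd c f u := by
  simp [pd, fderiv_fun_pow n hf, mul_assoc]

theorem pd_inv (hf : DifferentiableAt ℂ f u) (hu : f u ≠ 0) :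
    pd c (fun x => (f x)⁻¹) u = -pd c f u / f u ^ 2 := by
  have hinv := ((hasFDerivAt_inv hu).comp u hf.hasFDerivAt).fderiv
  simp only [pd, show (fun x => (f x)⁻¹) = (·⁻¹) ∘ f from rfl, hinv]
  simp [div_eq_mul_inv]

theorem pd_div (hf : DifferentiableAt ℂ f u) (hh : DifferentiableAt ℂ h u) (hu : h u ≠ 0) :
    pd c (fun x => f x / h x) u = (pd c f u * h u - f u * pd c h u) / h u ^ 2 := by
  rw [show (fun x => f x / h x) = fun x => f x * (h x)⁻¹ from funext fun x => div_eq_mul_inv _ _,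
    pd_mul (h := fun x => (h x)⁻¹) hf (hh.inv hu), pd_inv hh hu]
  field_simp
  ring

end PartialDerivative

open SixIndex

theorem wp_singleton {g : ℕ} {σ : (Fin g → ℂ) → ℂ} {u : Fin g → ℂ} (hσ : ContDiff ℂ ⊤ σ)
    (hu : σ u ≠ 0) (a b c : Fin g) :
    wp σ a b [c] u = wp3Num (fun α => pdIter α σ u) a b c / σ u ^ 3 := by
  have hd {f : (Fin g → ℂ) → ℂ} (hf : ContDiff ℂ ⊤ f) : DifferentiableAt ℂ f u :=
    (hf.differentiable (by simp)).differentiableAt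
  have hσa := contDiff_pd hσ a
  have hσb := contDiff_pd hσ b
  have hσab := contDiff_pd hσa b
  rw [show wp σ a b [c] = pd c (wp2 σ a b) from rfl,
    show wp2 σ a b = fun x => (pd a σ x * pd b σ x - σ x * pd b (pd a σ) x) / σ x ^ 2 from rfl,
    pd_div (f := fun x => pd a σ x * pd b σ x - σ x * pd b (pd a σ) x) (h := fun x => σ x ^ 2)
      (((hd hσa).mul (hd hσb)).sub ((hd hσ).mul (hd hσab))) ((hd hσ).pow 2) (pow_ne_zero 2 hu),
    pd_sub (f := fun x => pd a σ x * pd b σ x)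
      (h := fun x => σ x * pd b (pd a σ) x) ((hd hσa).mul (hd hσb)) ((hd hσ).mul (hd hσab)),
    pd_mul (hd hσa) (hd hσb), pd_mul (hd hσ) (hd hσab), pd_pow (hd hσ)]
  simp only [wp3Num, wp3Num₀, wp3Num₁, wp3Num₂, pdIter, List.foldl]
  field_simp
  ring

theorem statement11_general {g : ℕ} (i j k l m n : Fin g) :
    ∃ P : MvPolynomial {α : List (Fin g) // α.length ≤ 3} ℚ,
      ∀ σ : (Fin g → ℂ) → ℂ, ContDiff ℂ ⊤ σ → ∀ u : Fin g → ℂ, σ u ≠ 0 →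
        σ u ^ 4 * (wp2 σ i j u * wp2 σ k l u * wp2 σ m n u
            - (1 / 8) *
              (wp σ i j [k] u * wp σ l m [n] u + wp σ i j [l] u * wp σ k m [n] u
                + wp σ i j [m] u * wp σ k l [n] u + wp σ i j [n] u * wp σ k l [m] u
                + wp σ i k [l] u * wp σ j m [n] u - wp σ i k [m] u * wp σ j l [n] u
                - wp σ i k [n] u * wp σ j l [m] u - wp σ i l [m] u * wp σ j k [n] u
                - wp σ i l [n] u * wp σ j k [m] u + wp σ i m [n] u * wp σ j k [l] u))
          = MvPolynomial.aeval (fun v : {α : List (Fin g) // α.length ≤ 3} =>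
              pdIter v.1 σ u) P := by
  refine ⟨universalPoly i j k l m n, fun σ hσ u hu => ?_⟩
  rw [aeval_universalPoly i j k l m n (fun α => pdIter α σ u), map_div₀, map_one, map_ofNat]
  exact pow_four_mul_combination i j k l m n (fun α => pdIter α σ u) hu (fun a b => wp2 σ a b u)
    (fun a b c => wp σ a b [c] u) (fun _ _ => rfl) (wp_singleton hσ hu)

/-- there is a universal polynomial P in the partial derivatives of σ of
order at most 3 such that σ⁴ times the stated six-index combination equals P(∂^α σ);
in particular that combination has poles of order at most four. -/
theorem statement11 {g : ℕ} (hg : 1 ≤ g) (i j k l m n : Fin g) :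
    ∃ P : MvPolynomial {α : List (Fin g) // α.length ≤ 3} ℚ,
      ∀ σ : (Fin g → ℂ) → ℂ, ContDiff ℂ ⊤ σ → ∀ u : Fin g → ℂ, σ u ≠ 0 →
        σ u ^ 4 * (wp2 σ i j u * wp2 σ k l u * wp2 σ m n u
            - (1 / 8) *
              (wp σ i j [k] u * wp σ l m [n] u + wp σ i j [l] u * wp σ k m [n] u
                + wp σ i j [m] u * wp σ k l [n] u + wp σ i j [n] u * wp σ k l [m] u
                + wp σ i k [l] u * wp σ j m [n] u - wp σ i k [m] u * wp σ j l [n] u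
                - wp σ i k [n] u * wp σ j l [m] u - wp σ i l [m] u * wp σ j k [n] u
                - wp σ i l [n] u * wp σ j k [m] u + wp σ i m [n] u * wp σ j k [l] u))
          = MvPolynomial.aeval (fun v : {α : List (Fin g) // α.length ≤ 3} =>
              pdIter v.1 σ u) P :=
  statement11_general i j k l m n

end
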